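/- arXiv:1908.02915 — 5 statements merged into one kernel-verified Lean document; each statement's English description precedes it below -/
import Mathlib

section
/- Let z be a finite-dimensional abelian complex Lie algebra, let g₁, …, gₙ be finite-dimensional simple complex Lie algebras, and let g = z ⊕ g₁ ⊕ ⋯ ⊕ gₙ (direct sum of Lie algebras). Fix Cartan subalgebras hᵢ ⊆ gᵢ, so that h = z ⊕ h₁ ⊕ ⋯ ⊕ hₙ is a Cartan subalgebra of g. Then every Lie subalgebra s ⊆ g containing h is of the form s = z ⊕ s₁ ⊕ ⋯ ⊕ sₙ, where each sᵢ is a Lie subalgebra of gᵢ containing hᵢ. -/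
/-!
Fix a summand `I` of `L` with Cartan subalgebra `H ⊆ s`, and let `J` be the sum of the other
summands, so that `⁅I, J⁆ = 0`. As an `H`-module, `s` is the sum of its parts in the Fitting zero
component and in the positive Fitting component of `L`. The positive component lies in `⁅H, L⁆ ⊆ I`.
The zero component contains `J`, and its intersection with `I` is the zero root space of `H` in
`I`, which is `H` itself since `H` is a Cartan subalgebra. Hence the `I`-component of every
element of `s` lies in `s`, and `s` is the sum of its intersections with the summands. The
abelian summand `z` is its own Cartan subalgebra, so it is covered by the same argument.
-/

open DirectSum

namespace LieModule

variable {R L : Type*} [CommRing R] [LieRing L] [LieAlgebra R L]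

section Fitting

variable [LieRing.IsNilpotent L] {M : Type*} [AddCommGroup M] [Module R M] [LieRingModule L M]
  [LieModule R L M]

lemma mem_genWeightSpace_zero_of_forall_lie_eq_zero {m : M} (hm : ∀ x : L, ⁅x, m⁆ = 0) :
    m ∈ genWeightSpace M (0 : L → R) :=
  (mem_genWeightSpace _ _ _).mpr fun x => ⟨1, by simpa using hm x⟩

lemma le_inf_genWeightSpace_zero_sup_inf_posFittingComp [IsNoetherian R M] [IsArtinian R M]
    (N : LieSubmodule R L M) :
    N ≤ (N ⊓ genWeightSpace M 0) ⊔ (N ⊓ posFittingComp R L M) := by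
  calc N = (⊤ : LieSubmodule R L N).map N.incl := by simp
    _ = (genWeightSpace N 0).map N.incl ⊔ (posFittingComp R L N).map N.incl := by
      rw [← (isCompl_genWeightSpace_zero_posFittingComp R L N).sup_eq_top, LieSubmodule.map_sup]
    _ ≤ _ := sup_le_sup (le_inf LieSubmodule.map_incl_le (map_genWeightSpace_le _))
      (le_inf LieSubmodule.map_incl_le (map_posFittingComp_le _))

end Fitting

lemma posFittingComp_le_of_le {H : LieSubalgebra R L} [LieRing.IsNilpotent H] {I : LieIdeal R L}
    (hHI : H.toSubmodule ≤ I.toSubmodule) :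
    (posFittingComp R H L).toSubmodule ≤ I.toSubmodule := by
  rw [posFittingComp, LieSubmodule.iSup_toSubmodule]
  refine iSup_le fun x m hm => ?_
  obtain ⟨n, rfl⟩ := (mem_posFittingCompOf R x m).mp hm 1
  exact lie_mem_left R L I x n (hHI x.2)

end LieModule

instance LieSubalgebra.isNilpotent_map {R L L' : Type*} [CommRing R] [LieRing L] [LieAlgebra R L]
    [LieRing L'] [LieAlgebra R L'] (f : L →ₗ⁅R⁆ L') (H : LieSubalgebra R L)
    [LieRing.IsNilpotent H] : LieRing.IsNilpotent (H.map f) := by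
  have : (f.comp H.incl).range = H.map f := by ext; simp
  exact this ▸ (f.comp H.incl).isNilpotent_range

lemma LieIdeal.lie_eq_zero_of_disjoint {R L : Type*} [CommRing R] [LieRing L] [LieAlgebra R L]
    {I J : LieIdeal R L} (hIJ : Disjoint I J) {x y : L} (hx : x ∈ I) (hy : y ∈ J) :
    ⁅x, y⁆ = 0 := by
  have := LieSubmodule.lie_le_inf I J (LieSubmodule.lie_mem_lie hx hy)
  rwa [hIJ.eq_bot, LieSubmodule.mem_bot] at this

lemma DirectSum.IsInternal.le_iSup_inf {R M κ : Type*} [Ring R] [AddCommGroup M] [Module R M]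
    [DecidableEq κ] {F : κ → Submodule R M} (hF : IsInternal F) {s : Submodule R M}
    (hs : ∀ k, s ≤ (s ⊓ F k) ⊔ ⨆ (j) (_ : j ≠ k), F j) :
    s ≤ ⨆ k, s ⊓ F k := by
  classical
  let := hF.chooseDecomposition
  intro x hx
  rw [← sum_support_decompose F x]
  refine Submodule.sum_mem _ fun k _ => Submodule.mem_iSup_of_mem k ⟨?_, (decompose F x k).2⟩
  obtain ⟨a, ha, b, hb, rfl⟩ := Submodule.mem_sup.mp (hs k hx)
  have hb₀ : (⨆ (j) (_ : j ≠ k), F j) ≤ LinearMap.ker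
      ((F k).subtype ∘ₗ component R κ (fun j => F j) k ∘ₗ (decomposeLinearEquiv F).toLinearMap) :=
    iSup₂_le fun j hj y hy => decompose_of_mem_ne F hy hj
  replace hb₀ : (decompose F b k : M) = 0 := hb₀ hb
  simpa [decompose_add, decompose_of_mem_same F ha.2, hb₀] using ha.1

section Cartan

open LieAlgebra LieModule

variable {R L : Type*} [CommRing R] [LieRing L] [LieAlgebra R L]

lemma LieAlgebra.mem_map_incl_of_mem_zeroRootSubalgebra {I : LieIdeal R L} [IsNoetherian R I]
    (H : LieSubalgebra R I) [H.IsCartanSubalgebra] {x : L}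
    (hx : x ∈ zeroRootSubalgebra R L (H.map I.incl)) (hxI : x ∈ I) : x ∈ H.map I.incl := by
  suffices (⟨x, hxI⟩ : I) ∈ zeroRootSubalgebra R I H by
    rw [zeroRootSubalgebra_eq_of_is_cartan] at this
    exact ⟨_, this, rfl⟩
  rw [mem_zeroRootSubalgebra] at hx ⊢
  intro y
  let y' : H.map I.incl := ⟨y, y, y.2, rfl⟩
  obtain ⟨k, hk⟩ := hx y'
  have hcomm : toEnd R _ L y' ∘ₗ I.subtype = I.subtype ∘ₗ toEnd R H I y := rfl
  refine ⟨k, Subtype.ext ?_⟩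
  simpa [hk] using
    (LinearMap.congr_fun (Module.End.commute_pow_left_of_commute hcomm k) ⟨x, hxI⟩).symm

variable [IsNoetherian R L] [IsArtinian R L]

lemma LieSubalgebra.toSubmodule_le_inf_sup_of_map_le {I : LieIdeal R L} {J : Submodule R L}
    (hIJ : Codisjoint I.toSubmodule J) (hJ : ∀ x ∈ I, ∀ y ∈ J, ⁅x, y⁆ = 0)
    (H : LieSubalgebra R I) [H.IsCartanSubalgebra] {s : LieSubalgebra R L}
    (hs : H.map I.incl ≤ s) :
    s.toSubmodule ≤ (s.toSubmodule ⊓ I.toSubmodule) ⊔ J := by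
  set H' := H.map I.incl
  have hH'I : H'.toSubmodule ≤ I.toSubmodule := by
    rintro - ⟨y, -, rfl⟩
    exact y.2
  let N : LieSubmodule R H' L :=
    { s.toSubmodule with lie_mem := fun {y} _ hm => s.lie_mem (hs y.2) hm }
  intro x hx
  obtain ⟨u, ⟨-, hu⟩, v, ⟨hvs, hv⟩, rfl⟩ :=
    (LieSubmodule.mem_sup _ _ _).mp (le_inf_genWeightSpace_zero_sup_inf_posFittingComp N hx)
  have hvI : v ∈ I := posFittingComp_le_of_le hH'I hv
  obtain ⟨a, ha, b, hb, rfl⟩ := Submodule.mem_sup.mp (hIJ.eq_top ▸ Submodule.mem_top (x := u))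
  have hb₀ : b ∈ zeroRootSubalgebra R L H' :=
    mem_genWeightSpace_zero_of_forall_lie_eq_zero fun y => hJ _ (hH'I y.2) _ hb
  have ha₀ : a ∈ zeroRootSubalgebra R L H' := by
    simpa using sub_mem (show a + b ∈ zeroRootSubalgebra R L H' from hu) hb₀
  have has : a ∈ s := hs (mem_map_incl_of_mem_zeroRootSubalgebra H ha₀ ha)
  refine Submodule.mem_sup.mpr ⟨a + v, ⟨s.add_mem has hvs, I.add_mem ha hvI⟩, b, hb, ?_⟩
  abel

theorem LieSubalgebra.toSubmodule_eq_iSup_inf_of_isInternal {κ : Type*} [DecidableEq κ]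
    {G : κ → LieIdeal R L} (hG : IsInternal fun k => (G k).toSubmodule) {s : LieSubalgebra R L}
    (hs : ∀ k, ∃ H : LieSubalgebra R (G k), H.IsCartanSubalgebra ∧ H.map (G k).incl ≤ s) :
    s.toSubmodule = ⨆ k, s.toSubmodule ⊓ (G k).toSubmodule := by
  refine le_antisymm (hG.le_iSup_inf fun k => ?_) (iSup_le fun k => inf_le_left)
  obtain ⟨H, hH, hHs⟩ := hs k
  have hcod : Codisjoint (G k).toSubmodule (⨆ (j) (_ : j ≠ k), (G j).toSubmodule) := by
    rw [codisjoint_iff, ← iSup_split_single (fun j => (G j).toSubmodule) k,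
      hG.submodule_iSup_eq_top]
  have hcomm : ∀ x ∈ G k, ∀ y ∈ ⨆ (j) (_ : j ≠ k), (G j).toSubmodule, ⁅x, y⁆ = 0 := by
    intro x hx
    refine iSup₂_le (f := fun j _ => (G j).toSubmodule)
      (a := LinearMap.ker (toEnd R L L x)) fun j hj y hy => ?_
    exact LieIdeal.lie_eq_zero_of_disjoint
      (LieSubmodule.disjoint_toSubmodule.mp (hG.submodule_iSupIndep.pairwiseDisjoint hj.symm))
      hx hy
  exact toSubmodule_le_inf_sup_of_map_le hcod hcomm H hHs

end Cartan

theorem subalgebra_containing_cartan_decomposes_general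
    (L : Type) [LieRing L] [LieAlgebra ℂ L] [FiniteDimensional ℂ L]
    (ι : Type) [DecidableEq ι]
    (z : LieIdeal ℂ L) (hz : IsLieAbelian z)
    (g : ι → LieIdeal ℂ L)
    (hdirect : DirectSum.IsInternal
      (fun o : Option ι => o.elim (z : Submodule ℂ L) (fun i => ((g i : Submodule ℂ L)))))
    (h : ι → LieSubalgebra ℂ L)
    (hcartan : ∀ i, ∃ H' : LieSubalgebra ℂ (g i), H'.IsCartanSubalgebra ∧
        LieSubalgebra.map (g i).incl H' = h i) :
    ∀ s : LieSubalgebra ℂ L,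
      (z : Submodule ℂ L) ≤ s.toSubmodule → (∀ i, h i ≤ s) →
      ∃ s' : ι → LieSubalgebra ℂ L,
        (∀ i, (s' i).toSubmodule ≤ (g i : Submodule ℂ L)) ∧
        (∀ i, h i ≤ s' i) ∧
        s.toSubmodule = (z : Submodule ℂ L) ⊔ ⨆ i, (s' i).toSubmodule := by
  intro s hzs hhs
  let G : Option ι → LieIdeal ℂ L := fun o => o.elim z g
  have hG : IsInternal fun o => (G o).toSubmodule := by
    convert hdirect using 2 with o
    cases o <;> rfl
  have hdec := s.toSubmodule_eq_iSup_inf_of_isInternal hG fun o => by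
    cases o with
    | none =>
      show ∃ H : LieSubalgebra ℂ z, H.IsCartanSubalgebra ∧ H.map z.incl ≤ s
      exact ⟨⊤, inferInstance, by rintro - ⟨y, -, rfl⟩; exact hzs y.2⟩
    | some i =>
      obtain ⟨H, hH, hHh⟩ := hcartan i
      exact ⟨H, hH, hHh ▸ hhs i⟩
  have hhg : ∀ i, h i ≤ (g i).toLieSubalgebra := fun i => by
    obtain ⟨H, -, hHh⟩ := hcartan i
    rw [← hHh]
    rintro - ⟨y, -, rfl⟩
    exact y.2
  refine ⟨fun i => s ⊓ (g i).toLieSubalgebra, fun i => inf_le_right,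
    fun i => le_inf (hhs i) (hhg i), ?_⟩
  rw [hdec, iSup_option]
  exact congrArg (· ⊔ _) (inf_eq_right.mpr hzs)

/-- **Lemma 4.3** (Cartan-containing form): if `g = z ⊕ g₁ ⊕ ⋯ ⊕ gₙ` with `z` abelian and
each `gᵢ` simple (an internal direct sum of ideals of `L`), and `hᵢ ⊆ gᵢ` are Cartan
subalgebras, then every subalgebra `s` containing `z` and every `hᵢ` decomposes as
`s = z ⊕ s₁ ⊕ ⋯ ⊕ sₙ` with `sᵢ ⊆ gᵢ` a subalgebra containing `hᵢ`. -/
theorem subalgebra_containing_cartan_decomposes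
    (L : Type) [LieRing L] [LieAlgebra ℂ L] [FiniteDimensional ℂ L]
    (ι : Type) [Fintype ι] [DecidableEq ι]
    (z : LieIdeal ℂ L) (hz : IsLieAbelian z)
    (g : ι → LieIdeal ℂ L) (hg : ∀ i, LieAlgebra.IsSimple ℂ (g i))
    (hdirect : DirectSum.IsInternal
      (fun o : Option ι => o.elim (z : Submodule ℂ L) (fun i => ((g i : Submodule ℂ L)))))
    (h : ι → LieSubalgebra ℂ L)
    (hcartan : ∀ i, ∃ H' : LieSubalgebra ℂ (g i), H'.IsCartanSubalgebra ∧
        LieSubalgebra.map (g i).incl H' = h i) :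
    ∀ s : LieSubalgebra ℂ L,
      (z : Submodule ℂ L) ≤ s.toSubmodule → (∀ i, h i ≤ s) →
      ∃ s' : ι → LieSubalgebra ℂ L,
        (∀ i, (s' i).toSubmodule ≤ (g i : Submodule ℂ L)) ∧
        (∀ i, h i ≤ s' i) ∧
        s.toSubmodule = (z : Submodule ℂ L) ⊔ ⨆ i, (s' i).toSubmodule :=
  subalgebra_containing_cartan_decomposes_general L ι z hz g hdirect h hcartan
end

section
/- Let 0 → A → B → C → 0 be a short exact sequence of finitely generated abelian groups (i.e., the map A → B is injective, the map B → C is surjective, and the image of A → B equals the kernel of B → C). If B is isomorphic as an abelian group to the direct product A × C, then the sequence splits: the surjection B → C admits a group-homomorphism section C → B (equivalently, the injection A → B admits a retraction). -/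
/-!
Let `T` be the torsion subgroup of `C`; it is finite and `C ⧸ T` is free. Hence `g` splits as soon
as the inclusion `T → C` lifts along `g`. Applying `Hom(T, -)` gives an exact sequence
`0 → Hom(T, A) → Hom(T, B) → Hom(T, C)` of finite groups, and `B ≃ A × C` gives
`|Hom(T, B)| = |Hom(T, A)| · |Hom(T, C)|`, so the last map is onto by counting.
-/

open Function

theorem AddCommGroup.finite_torsion_of_fg (G : Type*) [AddCommGroup G] [AddGroup.FG G] :
    Finite (torsion G) := by
  have : Module.Finite ℤ G := Module.Finite.iff_addGroup_fg.mpr ‹_›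
  have : Finite (Submodule.torsion ℤ G) :=
    Module.finite_of_fg_torsion _ Submodule.torsion_isTorsion
  rw [← Submodule.torsion_int]
  exact this

theorem AddMonoidHom.finite_of_finite_of_fg (T G : Type*) [AddCommGroup T] [AddCommGroup G]
    [Finite T] [AddGroup.FG G] : Finite (T →+ G) := by
  have := AddCommGroup.finite_torsion_of_fg G
  let restrict (φ : T →+ G) (t : T) : AddCommGroup.torsion G :=
    ⟨φ t, φ.isOfFinAddOrder (isOfFinAddOrder_of_finite t)⟩
  refine Finite.of_injective restrict fun φ ψ h ↦ ?_
  ext t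
  exact congrArg Subtype.val (congrFun h t)

theorem Nat.card_addMonoidHom_prod (T A C : Type*) [AddZeroClass T] [AddCommMonoid A]
    [AddCommMonoid C] : Nat.card (T →+ A × C) = Nat.card (T →+ A) * Nat.card (T →+ C) := by
  rw [← Nat.card_prod]
  refine Nat.card_congr
    { toFun φ := ((AddMonoidHom.fst A C).comp φ, (AddMonoidHom.snd A C).comp φ)
      invFun p := p.1.prod p.2
      left_inv φ := AddMonoidHom.prod_unique φ
      right_inv p := Prod.ext (AddMonoidHom.fst_comp_prod _ _) (AddMonoidHom.snd_comp_prod _ _) }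

namespace AddMonoidHom

variable {T A B C : Type*} [AddZeroClass T] [AddCommGroup A] [AddCommGroup B] [AddCommGroup C]

def kerCompHomEquiv (g : B →+ C) : (compHom g : (T →+ B) →+ (T →+ C)).ker ≃ (T →+ g.ker) where
  toFun φ := φ.1.codRestrict g.ker fun t ↦ DFunLike.congr_fun (mem_ker.mp φ.2) t
  invFun ψ := ⟨g.ker.subtype.comp ψ, by ext t; exact (ψ t).2⟩
  left_inv _ := rfl
  right_inv _ := rfl

theorem card_ker_compHom {f : A →+ B} {g : B →+ C} (hf : Injective f) (hex : f.range = g.ker) :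
    Nat.card (compHom g : (T →+ B) →+ (T →+ C)).ker = Nat.card (T →+ A) :=
  Nat.card_congr <| (kerCompHomEquiv g).trans <| AddEquiv.addMonoidHomCongrRightEquiv <|
    (AddEquiv.addSubgroupCongr hex).symm.trans (ofInjective hf).symm

theorem surjective_compHom_of_card_eq [Finite (T →+ B)] [Finite (T →+ C)]
    {f : A →+ B} {g : B →+ C} (hf : Injective f) (hex : f.range = g.ker)
    (hcard : Nat.card (T →+ B) = Nat.card (T →+ A) * Nat.card (T →+ C)) :
    Surjective (compHom g : (T →+ B) →+ (T →+ C)) := by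
  refine surjective_of_card_ker_le_div _ (le_of_eq ?_)
  rw [card_ker_compHom hf hex, hcard, Nat.mul_div_cancel _ Nat.card_pos]

theorem exists_section_of_subtype_lifts {g : B →+ C} (hg : Surjective g) (T : AddSubgroup C)
    [Module.Projective ℤ (C ⧸ T)] {σ : T →+ B} (hσ : g.comp σ = T.subtype) :
    ∃ s : C →+ B, g.comp s = AddMonoidHom.id C := by
  let π := QuotientAddGroup.mk' T
  obtain ⟨ρ, hρ⟩ := Module.projective_lifting_property π.toIntLinearMap LinearMap.id
    (QuotientAddGroup.mk'_surjective T)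
  obtain ⟨l, hl⟩ := Module.projective_lifting_property g.toIntLinearMap ρ hg
  have hρ' (q : C ⧸ T) : π (ρ q) = q := LinearMap.congr_fun hρ q
  have hl' (q : C ⧸ T) : g (l q) = ρ q := LinearMap.congr_fun hl q
  -- `τ` is the projection onto `T` along the complement `ρ (C ⧸ T)`.
  let τ : C →+ T := (AddMonoidHom.id C - ρ.toAddMonoidHom.comp π).codRestrict T fun c ↦
    (QuotientAddGroup.eq_zero_iff _).mp <| show π (c - ρ (π c)) = 0 by
      rw [map_sub, hρ', sub_self]
  refine ⟨σ.comp τ + l.toAddMonoidHom.comp π, ?_⟩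
  ext c
  have hστ : g (σ (τ c)) = c - ρ (π c) := congrArg (· (τ c)) hσ
  simp [hστ, hl']

end AddMonoidHom

theorem ses_splits_of_middle_iso_prod_general (A B C : Type)
    [AddCommGroup A] [AddCommGroup B] [AddCommGroup C]
    [AddGroup.FG B] [AddGroup.FG C]
    (f : A →+ B) (g : B →+ C)
    (hf : Function.Injective f) (hg : Function.Surjective g)
    (hex : f.range = g.ker)
    (hiso : Nonempty (B ≃+ A × C)) :
    ∃ s : C →+ B, g.comp s = AddMonoidHom.id C := by
  obtain ⟨e⟩ := hiso
  let T := AddCommGroup.torsion C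
  have := AddCommGroup.finite_torsion_of_fg C
  have := AddMonoidHom.finite_of_finite_of_fg T B
  have := AddMonoidHom.finite_of_finite_of_fg T C
  have hcard : Nat.card (T →+ B) = Nat.card (T →+ A) * Nat.card (T →+ C) := by
    rw [Nat.card_congr e.addMonoidHomCongrRightEquiv, Nat.card_addMonoidHom_prod]
  obtain ⟨σ, hσ⟩ := AddMonoidHom.surjective_compHom_of_card_eq hf hex hcard T.subtype
  -- provides `Module.Projective ℤ (C ⧸ T)`: a finite torsion-free `ℤ`-module is free
  have : Module.Finite ℤ C := Module.Finite.iff_addGroup_fg.mpr ‹_›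
  exact AddMonoidHom.exists_section_of_subtype_lifts hg T hσ

/-- **Miyata's splitting theorem**: a short exact sequence `0 → A → B → C → 0` of finitely
generated abelian groups with `B ≅ A × C` splits. -/
theorem ses_splits_of_middle_iso_prod (A B C : Type)
    [AddCommGroup A] [AddCommGroup B] [AddCommGroup C]
    [AddGroup.FG A] [AddGroup.FG B] [AddGroup.FG C]
    (f : A →+ B) (g : B →+ C)
    (hf : Function.Injective f) (hg : Function.Surjective g)
    (hex : f.range = g.ker)
    (hiso : Nonempty (B ≃+ A × C)) :
    ∃ s : C →+ B, g.comp s = AddMonoidHom.id C :=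
  ses_splits_of_middle_iso_prod_general A B C f g hf hg hex hiso
end

section
/- Let m ≥ 1 and let k₁, …, k_m be nonzero integers. Let the group 𝕋 = ℂ* act on ℂ^m by t·(v₁, …, v_m) = (t^{k₁}v₁, …, t^{k_m}v_m). Let Γ = ℂ* × μ_{|k₁|} × ⋯ × μ_{|k_m|}, where μ_d ⊂ ℂ* is the group of d-th roots of unity, act on ℂ^m by (λ, ζ₁, …, ζ_m)·(v₁, …, v_m) = (λ^{ε₁}ζ₁v₁, …, λ^{ε_m}ζ_m v_m), where ε_i = k_i/|k_i| is the sign of k_i. Then the map f : ℂ^m → ℂ^m given by f(v₁, …, v_m) = (v₁^{|k₁|}, …, v_m^{|k_m|}) induces a homeomorphism of orbit spaces ℂ^m/Γ → ℂ^m/𝕋. -/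
/-- The orbit equivalence relation of a group action given by `φ : G →* Function.End X`;
`Quotient (actionSetoid φ)` is the orbit space with its quotient topology. -/
def actionSetoid {G X : Type*} [Group G] (φ : G →* Function.End X) : Setoid X where
  r v w := ∃ g : G, φ g v = w
  iseqv := by
    constructor
    · intro v
      exact ⟨1, by rw [map_one]; rfl⟩
    · rintro v w ⟨g, rfl⟩
      refine ⟨g⁻¹, ?_⟩
      have h : φ g⁻¹ * φ g = 1 := by rw [← map_mul, inv_mul_cancel, map_one]
      calc φ g⁻¹ (φ g v) = (φ g⁻¹ * φ g) v := rfl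
      _ = v := by rw [h]; rfl
    · rintro u v w ⟨g, rfl⟩ ⟨g', rfl⟩
      refine ⟨g' * g, ?_⟩
      calc φ (g' * g) u = (φ g' * φ g) u := by rw [map_mul]
      _ = φ g' (φ g u) := rfl

/-- The weighted `𝕋 = ℂ*`-action `t·(v₁,…,v_m) = (t^{k₁}v₁, …, t^{k_m}v_m)` on `ℂ^m`. -/
def weightHom (m : ℕ) (k : Fin m → ℤ) : ℂˣ →* Function.End (Fin m → ℂ) where
  toFun t := fun v i => ((t ^ k i : ℂˣ) : ℂ) * v i
  map_one' := by
    funext v i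
    show ((1 : ℂˣ) ^ k i : ℂˣ) * v i = v i
    simp
  map_mul' := by
    intro a b
    funext v i
    show (((a * b) ^ k i : ℂˣ) : ℂ) * v i = ((a ^ k i : ℂˣ) : ℂ) * (((b ^ k i : ℂˣ) : ℂ) * v i)
    simp [mul_zpow]
    ring

/-- The action of `Γ = ℂ* × μ_{|k₁|} × ⋯ × μ_{|k_m|}` on `ℂ^m` by
`(λ, ζ₁, …, ζ_m)·v = (λ^{ε₁}ζ₁v₁, …, λ^{ε_m}ζ_m v_m)`, where `ε_i` is the sign of `k_i`. -/
def gammaHom (m : ℕ) (k : Fin m → ℤ) :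
    (ℂˣ × (∀ i : Fin m, ↥(rootsOfUnity (k i).natAbs ℂ))) →* Function.End (Fin m → ℂ) where
  toFun γ := fun v i => ((γ.1 ^ (k i).sign : ℂˣ) : ℂ) * (((γ.2 i : ℂˣ) : ℂ) * v i)
  map_one' := by
    funext v i
    show (((1 : ℂˣ) ^ (k i).sign : ℂˣ) : ℂ) * ((((1 : ℂˣ)) : ℂ) * v i) = v i
    simp
  map_mul' := by
    intro a b
    funext v i
    show (((a.1 * b.1) ^ (k i).sign : ℂˣ) : ℂ) * (((a.2 i * b.2 i : ℂˣ) : ℂ) * v i)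
      = ((a.1 ^ (k i).sign : ℂˣ) : ℂ) * (((a.2 i : ℂˣ) : ℂ) *
          (((b.1 ^ (k i).sign : ℂˣ) : ℂ) * (((b.2 i : ℂˣ) : ℂ) * v i)))
    simp [mul_zpow]
    ring

/-!
The power map `f` is equivariant along `Γ → 𝕋, (λ, ζ) ↦ λ`, because
`(λ^{εᵢ} ζᵢ vᵢ)^{|kᵢ|} = λ^{kᵢ} vᵢ^{|kᵢ|}`. Conversely, if `f v` and `f w` lie in one `𝕋`-orbit,
say `λ^{kᵢ} vᵢ^{|kᵢ|} = wᵢ^{|kᵢ|}`, then `wᵢ` and `λ^{εᵢ} vᵢ` have the same `|kᵢ|`-th power and so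
differ by a `|kᵢ|`-th root of unity. Hence `f` induces a bijection of orbit spaces. Each
`z ↦ z^{|kᵢ|}` is an open surjection of `ℂ`, so `f` is a quotient map, and therefore so is the
induced bijection, which is thus a homeomorphism.
-/

open Topology

theorem Topology.IsQuotientMap.exists_homeomorph_quotient {X Y : Type*} [TopologicalSpace X]
    [TopologicalSpace Y] {s : Setoid X} {t : Setoid Y} {f : X → Y}
    (hf : IsQuotientMap f) (hrel : ∀ v w, s v w ↔ t (f v) (f w)) :
    ∃ F : Quotient s ≃ₜ Quotient t, ∀ v, F (Quotient.mk s v) = Quotient.mk t (f v) := by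
  let F : Quotient s → Quotient t :=
    Quotient.lift (fun v => Quotient.mk t (f v)) fun v w h => Quotient.sound ((hrel v w).mp h)
  have hF_injective : Function.Injective F := by
    rintro ⟨v⟩ ⟨w⟩ h
    exact Quotient.sound ((hrel v w).mpr (Quotient.exact h))
  have hF_quotient : IsQuotientMap F :=
    IsQuotientMap.of_comp continuous_quot_mk
      (continuous_quot_lift _ (continuous_quot_mk.comp hf.continuous))
      (isQuotientMap_quotient_mk'.comp hf)
  exact ⟨(isHomeomorph_iff_isQuotientMap_injective.mpr ⟨hF_quotient, hF_injective⟩).homeomorph F,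
    fun v => rfl⟩

theorem zpow_sign_pow_natAbs {G : Type*} [Group G] (t : G) (k : ℤ) :
    (t ^ k.sign) ^ k.natAbs = t ^ k := by
  rw [← zpow_natCast, ← zpow_mul, Int.sign_mul_natAbs]

theorem exists_rootsOfUnity_mul_eq_of_pow_eq {K : Type*} [CommGroupWithZero K] {n : ℕ}
    (hn : n ≠ 0) {a b : K} (h : a ^ n = b ^ n) : ∃ ζ : rootsOfUnity n K, ((ζ : Kˣ) : K) * a = b := by
  rcases eq_or_ne a 0 with rfl | ha
  · refine ⟨1, ?_⟩
    rw [zero_pow hn, eq_comm, pow_eq_zero_iff hn] at h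
    simp [h]
  · have hb : b ≠ 0 := by
      rintro rfl
      exact ha (pow_eq_zero_iff hn |>.mp (h.trans (zero_pow hn)))
    refine ⟨⟨Units.mk0 (b / a) (div_ne_zero hb ha), ?_⟩, div_mul_cancel₀ b ha⟩
    rw [mem_rootsOfUnity, Units.ext_iff, Units.val_pow_eq_pow_val, Units.val_mk0, div_pow, h,
      div_self (pow_ne_zero n hb), Units.val_one]

def powMap {ι : Type*} (k : ι → ℤ) (v : ι → ℂ) : ι → ℂ := fun i => v i ^ (k i).natAbs

theorem isQuotientMap_powMap {ι : Type*} {k : ι → ℤ} (hk : ∀ i, k i ≠ 0) :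
    IsQuotientMap (powMap k) :=
  (IsOpenQuotientMap.piMap fun i =>
    haveI : NeZero (k i).natAbs := ⟨Int.natAbs_ne_zero.mpr (hk i)⟩
    Complex.isOpenQuotientMap_pow _).isQuotientMap

section GammaAction

variable {m : ℕ} {k : Fin m → ℤ}

theorem powMap_gammaHom (γ : ℂˣ × (∀ i : Fin m, ↥(rootsOfUnity (k i).natAbs ℂ)))
    (v : Fin m → ℂ) : powMap k (gammaHom m k γ v) = weightHom m k γ.1 (powMap k v) := by
  funext i
  have hζ : ((γ.2 i : ℂˣ) : ℂ) ^ (k i).natAbs = 1 := by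
    rw [← Units.val_pow_eq_pow_val, (mem_rootsOfUnity _ _).mp (γ.2 i).2, Units.val_one]
  change (((γ.1 ^ (k i).sign : ℂˣ) : ℂ) * (((γ.2 i : ℂˣ) : ℂ) * v i)) ^ (k i).natAbs
    = ((γ.1 ^ k i : ℂˣ) : ℂ) * v i ^ (k i).natAbs
  rw [mul_pow, mul_pow, hζ, one_mul, ← Units.val_pow_eq_pow_val, zpow_sign_pow_natAbs]

theorem actionSetoid_gammaHom_iff (hk : ∀ i, k i ≠ 0) (v w : Fin m → ℂ) :
    actionSetoid (gammaHom m k) v w ↔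
      actionSetoid (weightHom m k) (powMap k v) (powMap k w) := by
  constructor
  · rintro ⟨γ, rfl⟩
    exact ⟨γ.1, (powMap_gammaHom γ v).symm⟩
  · rintro ⟨t, ht⟩
    have hpow : ∀ i, (((t ^ (k i).sign : ℂˣ) : ℂ) * v i) ^ (k i).natAbs = w i ^ (k i).natAbs := by
      intro i
      rw [mul_pow, ← Units.val_pow_eq_pow_val, zpow_sign_pow_natAbs]
      exact congrFun ht i
    choose ζ hζ using fun i =>
      exists_rootsOfUnity_mul_eq_of_pow_eq (Int.natAbs_ne_zero.mpr (hk i)) (hpow i)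
    refine ⟨(t, ζ), funext fun i => ?_⟩
    change ((t ^ (k i).sign : ℂˣ) : ℂ) * (((ζ i : ℂˣ) : ℂ) * v i) = w i
    rw [mul_left_comm, hζ i]

end GammaAction

theorem power_map_induces_homeomorph_of_orbit_spaces_general
    (m : ℕ) (k : Fin m → ℤ) (hk : ∀ i, k i ≠ 0) :
    ∃ F : Quotient (actionSetoid (gammaHom m k)) ≃ₜ Quotient (actionSetoid (weightHom m k)),
      ∀ v : Fin m → ℂ,
        F (Quotient.mk (actionSetoid (gammaHom m k)) v) =
          Quotient.mk (actionSetoid (weightHom m k)) (fun i => v i ^ (k i).natAbs) :=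
  (isQuotientMap_powMap hk).exists_homeomorph_quotient (actionSetoid_gammaHom_iff hk)

/-- **Lemma 5.5**: the map `f(v₁,…,v_m) = (v₁^{|k₁|}, …, v_m^{|k_m|})` induces a
homeomorphism `ℂ^m/Γ ≃ ℂ^m/𝕋` between the orbit spaces. -/
theorem power_map_induces_homeomorph_of_orbit_spaces
    (m : ℕ) (hm : 1 ≤ m) (k : Fin m → ℤ) (hk : ∀ i, k i ≠ 0) :
    ∃ F : Quotient (actionSetoid (gammaHom m k)) ≃ₜ Quotient (actionSetoid (weightHom m k)),
      ∀ v : Fin m → ℂ,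
        F (Quotient.mk (actionSetoid (gammaHom m k)) v) =
          Quotient.mk (actionSetoid (weightHom m k)) (fun i => v i ^ (k i).natAbs) :=
  power_map_induces_homeomorph_of_orbit_spaces_general m k hk
end

section
/- Let n ≥ 2 and let d be a positive divisor of n. Let B ⊆ SL_n(ℂ) be the set of determinant-1 matrices that are block-diagonal with d diagonal blocks each of size n/d, and let M ∈ SL_n(ℂ) be a scalar multiple λ·P of the block cyclic permutation matrix P (which cyclically permutes the d blocks of n/d coordinates), where λ ∈ ℂ* is chosen so that det(λ·P) = 1. Then the subgroup of SL_n(ℂ) generated by B and M acts irreducibly on ℂⁿ: the only ℂ-linear subspaces of ℂⁿ invariant under every element of this subgroup are {0} and ℂⁿ. -/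
/-!
Diagonal matrices of determinant one are block diagonal, and a quadratic polynomial in a suitable
one projects a vector of `W` onto a single coordinate line; so a nonzero invariant `W` contains a
coordinate vector `e_x`. Transvections inside a block carry `e_x` to every coordinate vector of
that block, and `M` carries a coordinate vector to a nonzero multiple of its translate in the next
block. Hence `W` contains every coordinate vector.
-/

open Matrix

section CoordinateVectors

variable {R ι : Type*} [Fintype ι] [DecidableEq ι]

theorem Submodule.eq_top_of_forall_single_one_mem [Semiring R] {W : Submodule R (ι → R)}
    (h : ∀ i, Pi.single i 1 ∈ W) : W = ⊤ := by
  rw [eq_top_iff, ← (Pi.basisFun R ι).span_eq, Submodule.span_le]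
  rintro _ ⟨i, rfl⟩
  simpa using h i

theorem transvection_mulVec_single_one [CommRing R] (i j : ι) :
    transvection i j (1 : R) *ᵥ Pi.single j 1 = Pi.single j 1 + Pi.single i 1 := by
  rw [transvection, add_mulVec, one_mulVec, single_mulVec, Pi.single_eq_same, mul_one]
  rfl

theorem Submodule.single_one_mem_of_transvection_mulVec_mem [CommRing R]
    {W : Submodule R (ι → R)} {i j : ι}
    (hW : ∀ w ∈ W, transvection i j (1 : R) *ᵥ w ∈ W) (hj : Pi.single j 1 ∈ W) :
    Pi.single i 1 ∈ W := by
  have h := hW _ hj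
  rwa [transvection_mulVec_single_one, W.add_mem_iff_right hj] at h

/-- If `D` has diagonal entries `t` at `x`, `t⁻¹` at some `x' ≠ x` and `1` elsewhere, then
`(D - 1)(D - t⁻¹)` kills every coordinate vector except `e_x`, which it scales by
`(t - 1)(t - t⁻¹) ≠ 0`. -/
theorem Submodule.single_one_mem_of_diagonal_mulVec_mem [Field R] [Nontrivial ι]
    {W : Submodule R (ι → R)} (hW : ∀ f : ι → R, ∏ i, f i = 1 → ∀ w ∈ W, diagonal f *ᵥ w ∈ W)
    {t : R} (ht₀ : t ≠ 0) (ht : t ^ 2 ≠ 1) {w : ι → R} (hw : w ∈ W) {x : ι} (hx : w x ≠ 0) :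
    Pi.single x 1 ∈ W := by
  obtain ⟨x', hx'⟩ := exists_ne x
  set f : ι → R := Pi.mulSingle x t * Pi.mulSingle x' t⁻¹
  have hf : ∏ i, f i = 1 := by simp [f, Finset.prod_mul_distrib, ht₀]
  have hDw := hW f hf w hw
  have hDDw := hW f hf _ hDw
  have hc : (t - 1) * (t - t⁻¹) * w x ≠ 0 := by
    refine mul_ne_zero (mul_ne_zero ?_ ?_) hx
    · rintro h
      exact ht (by rw [sub_eq_zero.1 h, one_pow])
    · rw [sub_ne_zero]
      rintro h
      exact ht (by rw [sq, ← mul_inv_cancel₀ ht₀, ← h])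
  have hproj : diagonal f *ᵥ (diagonal f *ᵥ w) - (1 + t⁻¹) • diagonal f *ᵥ w + t⁻¹ • w
      = ((t - 1) * (t - t⁻¹) * w x) • Pi.single x 1 := by
    ext z
    have hz : (diagonal f *ᵥ (diagonal f *ᵥ w) - (1 + t⁻¹) • diagonal f *ᵥ w + t⁻¹ • w) z
        = (f z - 1) * (f z - t⁻¹) * w z := by
      simp only [Pi.add_apply, Pi.sub_apply, Pi.smul_apply, mulVec_diagonal, smul_eq_mul]
      ring
    rw [hz]
    obtain rfl | hzx := eq_or_ne z x
    · simp [f, hx'.symm]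
    obtain rfl | hzx' := eq_or_ne z x'
    · simp [f, hzx]
    · simp [f, hzx, hzx']
  have hmem := W.add_mem (W.sub_mem hDDw (W.smul_mem (1 + t⁻¹) hDw)) (W.smul_mem t⁻¹ hw)
  rwa [hproj, W.smul_mem_iff hc] at hmem

end CoordinateVectors

open Fin.NatCast in
theorem Fin.forall_of_forall_imp_add_one {d : ℕ} [NeZero d] {P : Fin d → Prop}
    (h : ∀ j, P j → P (j + 1)) {j₀ : Fin d} (h₀ : P j₀) (j : Fin d) : P j := by
  have hiter : ∀ s : ℕ, P (j₀ + s) := fun s => by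
    induction s with
    | zero => simpa using h₀
    | succ s ih => simpa [add_assoc] using h _ ih
  simpa using hiter (j - j₀).val

theorem transvection_apply_of_fst_ne {R ι κ : Type*} [DecidableEq ι] [DecidableEq κ] [CommRing R]
    (j : ι) (k k' : κ) (c : R) {x y : ι × κ} (h : x.1 ≠ y.1) :
    transvection (j, k) (j, k') c x y = 0 := by
  simp only [transvection, Matrix.add_apply, one_apply_ne (ne_of_apply_ne Prod.fst h), single_apply,
    zero_add, ite_eq_right_iff, and_imp]
  rintro rfl rfl
  exact absurd rfl h

section BlockCycle

variable {R ι κ : Type*} [DecidableEq ι] [DecidableEq κ] [Add ι] [One ι]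

def blockCycle [Zero R] (c : R) : Matrix (ι × κ) (ι × κ) R :=
  of fun x y => if x.1 = y.1 + 1 ∧ x.2 = y.2 then c else 0

@[simp]
theorem blockCycle_zero [Zero R] : (blockCycle 0 : Matrix (ι × κ) (ι × κ) R) = 0 := by
  ext; simp [blockCycle]

theorem blockCycle_mulVec_single_one [Fintype ι] [Fintype κ] [NonAssocSemiring R] (c : R)
    (j : ι) (k : κ) :
    blockCycle c *ᵥ Pi.single (j, k) 1 = c • Pi.single (j + 1, k) (1 : R) := by
  ext ⟨a, b⟩
  by_cases h : a = j + 1 ∧ b = k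
  · simp [blockCycle, h]
  · simp [blockCycle, h, Prod.ext_iff]

end BlockCycle

theorem Submodule.eq_bot_or_eq_top_of_blockDiagonal_of_blockCycle {K κ : Type*} [Field K]
    [Fintype κ] [DecidableEq κ] {d : ℕ} [NeZero d] [Nontrivial (Fin d × κ)]
    {W : Submodule K (Fin d × κ → K)} {t : K} (ht₀ : t ≠ 0) (ht : t ^ 2 ≠ 1)
    (hB : ∀ A : SpecialLinearGroup (Fin d × κ) K,
      (∀ x y : Fin d × κ, x.1 ≠ y.1 → (A : Matrix _ _ K) x y = 0) →
        ∀ w ∈ W, (A : Matrix _ _ K) *ᵥ w ∈ W)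
    {c : K} (hc : c ≠ 0) (hM : ∀ w ∈ W, blockCycle c *ᵥ w ∈ W) :
    W = ⊥ ∨ W = ⊤ := by
  refine (eq_or_ne W ⊥).imp_right fun hW₀ => ?_
  obtain ⟨w, hw, hw₀⟩ := W.ne_bot_iff.1 hW₀
  obtain ⟨⟨j₀, k₀⟩, hx⟩ := Function.ne_iff.1 hw₀
  have hdiag : ∀ f, ∏ i, f i = 1 → ∀ w ∈ W, diagonal f *ᵥ w ∈ W := fun f hf =>
    hB ⟨diagonal f, by rw [det_diagonal, hf]⟩
      fun x y hxy => diagonal_apply_ne _ (ne_of_apply_ne Prod.fst hxy)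
  have hcycle : ∀ j k, Pi.single (j, k) 1 ∈ W → Pi.single (j + 1, k) 1 ∈ W := fun j k h => by
    have := hM _ h
    rwa [blockCycle_mulVec_single_one, W.smul_mem_iff hc] at this
  have hblock : ∀ j k k', Pi.single (j, k) 1 ∈ W → Pi.single (j, k') 1 ∈ W := by
    intro j k k' h
    obtain rfl | hk := eq_or_ne k k'
    · exact h
    have hne : ((j, k') : Fin d × κ) ≠ (j, k) := by simpa using hk.symm
    exact W.single_one_mem_of_transvection_mulVec_mem
      (hB ⟨_, det_transvection_of_ne _ _ hne 1⟩ fun x y => transvection_apply_of_fst_ne j k' k 1) h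
  have h₀ : Pi.single (j₀, k₀) 1 ∈ W := W.single_one_mem_of_diagonal_mulVec_mem hdiag ht₀ ht hw hx
  exact W.eq_top_of_forall_single_one_mem fun ⟨j, k⟩ => hblock j k₀ k <|
    Fin.forall_of_forall_imp_add_one (P := fun j => Pi.single (j, k₀) 1 ∈ W)
      (fun j => hcycle j k₀) h₀ j

/-- The subgroup of `SL_n(ℂ)` generated by the block-diagonal matrices (with `d` blocks of
size `n/d`, coordinates indexed by `Fin d × Fin (n/d)`) together with a unimodular scalar
multiple `M = λ·P` of the block cyclic permutation matrix `P` acts irreducibly on `ℂⁿ`. -/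
theorem block_diagonal_and_cycle_generate_irreducible
    (n d : ℕ) (hn : 2 ≤ n) (hd : 0 < d) (hdvd : d ∣ n)
    (lam : ℂ) (M : Matrix.SpecialLinearGroup (Fin d × Fin (n / d)) ℂ)
    (hM : haveI : NeZero d := ⟨hd.ne'⟩
      (M : Matrix (Fin d × Fin (n / d)) (Fin d × Fin (n / d)) ℂ) =
        fun x y => if x.1 = y.1 + 1 ∧ x.2 = y.2 then lam else 0) :
    ∀ W : Submodule ℂ (Fin d × Fin (n / d) → ℂ),
      (∀ S ∈ Subgroup.closure
          ({A : Matrix.SpecialLinearGroup (Fin d × Fin (n / d)) ℂ |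
            ∀ x y : Fin d × Fin (n / d), x.1 ≠ y.1 →
              (A : Matrix (Fin d × Fin (n / d)) (Fin d × Fin (n / d)) ℂ) x y = 0} ∪ {M}),
        ∀ w ∈ W, Matrix.mulVec (S : Matrix (Fin d × Fin (n / d)) (Fin d × Fin (n / d)) ℂ) w ∈ W) →
      W = ⊥ ∨ W = ⊤ := by
  intro W hW
  have : NeZero d := ⟨hd.ne'⟩
  have : Nontrivial (Fin d × Fin (n / d)) := by
    rw [← Fintype.one_lt_card_iff_nontrivial, Fintype.card_prod, Fintype.card_fin,
      Fintype.card_fin, Nat.mul_div_cancel' hdvd]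
    omega
  have hM' : (M : Matrix (Fin d × Fin (n / d)) (Fin d × Fin (n / d)) ℂ) = blockCycle lam := hM
  have hlam : lam ≠ 0 := by
    rintro rfl
    simpa [hM'] using M.det_coe
  exact W.eq_bot_or_eq_top_of_blockDiagonal_of_blockCycle (t := 2) two_ne_zero (by norm_num)
    (fun A hA => hW A (Subgroup.subset_closure (Or.inl hA))) hlam
    (hM' ▸ hW M (Subgroup.subset_closure (Or.inr rfl)))
end

section
/- Let G be a group and let Z ≤ G be a central subgroup that is isomorphic, as an abstract group, to (ℂ*)^k × A for some k ≥ 0 and some finite abelian group A. If g ∈ G satisfies gⁿ ∈ Z for some integer n ≥ 1, then there exist s ∈ Z and an element h ∈ G of finite order such that g = h·s. -/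
/-!
Write `z = gⁿ ∈ Z ≅ (ℂ*)^k × A`. Since `(ℂ*)^k` is divisible, its component of `z` has an
`n`-th root `t`, and `s ∈ Z` corresponding to `(t, 1)` satisfies `z = sⁿ a` with `a` torsion.
As `s` is central, `(g s⁻¹)ⁿ = z s⁻ⁿ = a` has finite order, hence so does `h = g s⁻¹`.
-/

noncomputable instance IsAlgClosed.rootableByUnits (K : Type*) [Field K] [IsAlgClosed K] :
    RootableBy Kˣ ℕ :=
  rootableByOfPowLeftSurj _ _ fun {n} hn u => by
    obtain ⟨z, hz⟩ := IsAlgClosed.exists_pow_nat_eq (u : K) (Nat.pos_of_ne_zero hn)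
    have hz0 : z ≠ 0 := by
      rintro rfl
      exact u.ne_zero (by rw [← hz, zero_pow hn])
    exact ⟨Units.mk0 z hz0, Units.ext hz⟩

theorem MulEquiv.exists_isOfFinOrder_div_pow {H D A : Type*} [Group H] [Group D]
    [RootableBy D ℕ] [Group A] (hA : IsMulTorsion A) (φ : H ≃* D × A) (x : H) {n : ℕ}
    (hn : n ≠ 0) : ∃ s : H, IsOfFinOrder (x / s ^ n) := by
  refine ⟨φ.symm (RootableBy.root (φ x).1 n, 1), ?_⟩
  have hφ : φ (x / φ.symm (RootableBy.root (φ x).1 n, 1) ^ n) = (1, (φ x).2) := by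
    simp [RootableBy.root_cancel _ hn, Prod.ext_iff]
  rw [← φ.symm_apply_apply (x / _), hφ]
  exact φ.symm.toMonoidHom.isOfFinOrder (IsOfFinOrder.one.prod_mk (hA _))

theorem Commute.isOfFinOrder_mul_inv_of_pow {G : Type*} [Group G] {g s : G} (hgs : Commute g s)
    {n : ℕ} (hn : n ≠ 0) (h : IsOfFinOrder (g ^ n * (s ^ n)⁻¹)) : IsOfFinOrder (g * s⁻¹) := by
  rw [← inv_pow, ← hgs.inv_right.mul_pow] at h
  exact h.of_pow hn

/-- If `Z ≤ G` is central and abstractly isomorphic to `(ℂ*)^k × A` with `A` finite abelian,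
then any `g ∈ G` with `gⁿ ∈ Z` (`n ≥ 1`) is a product of a finite-order element and an
element of `Z`. -/
theorem eq_finOrder_mul_central_of_pow_mem_center
    (G : Type) [Group G] (Z : Subgroup G) (hZ : Z ≤ Subgroup.center G)
    (k : ℕ) (A : Type) [CommGroup A] [Finite A]
    (hiso : Nonempty (↥Z ≃* ((Fin k → ℂˣ) × A)))
    (g : G) (n : ℕ) (hn : 1 ≤ n) (hg : g ^ n ∈ Z) :
    ∃ s ∈ Z, ∃ h : G, IsOfFinOrder h ∧ g = h * s := by
  obtain ⟨φ⟩ := hiso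
  have hn0 : n ≠ 0 := Nat.one_le_iff_ne_zero.mp hn
  obtain ⟨s, hs⟩ := φ.exists_isOfFinOrder_div_pow isMulTorsion_of_finite ⟨g ^ n, hg⟩ hn0
  have hcomm : Commute g s := Subgroup.mem_center_iff.mp (hZ s.2) g
  refine ⟨s, s.2, g * (s : G)⁻¹, hcomm.isOfFinOrder_mul_inv_of_pow hn0 ?_, by group⟩
  simpa [div_eq_mul_inv] using Z.subtype.isOfFinOrder hs
end
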